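/- arXiv:2510.21003 — 2 statements merged into one kernel-verified Lean document; each statement's English description precedes it below -/
import Mathlib

section
/- Let n be a positive natural number and let p, q : EuclideanSpace ℝ (Fin n) → ℝ be differentiable functions that are strictly positive everywhere, both integrable with ∫ p = 1 and ∫ q = 1, and suppose their logarithmic gradients agree everywhere: for all x, (fderiv ℝ p x) / p(x) = (fderiv ℝ q x) / q(x) (equivalently, ∇ log p (x) = ∇ log q (x)). Then p = q. -/
open MeasureTheory

/-! Equal scores mean `∇ (log p - log q) = 0`, so on the connected space `ℝⁿ` the ratio
`p / q` is a constant `c`; integrating `p = c q` gives `c = 1`. -/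

theorem exists_eq_const_mul_of_score_eq {E : Type*} [NormedAddCommGroup E] [NormedSpace ℝ E]
    {f g : E → ℝ} (hf : Differentiable ℝ f) (hg : Differentiable ℝ g)
    (hf_pos : ∀ x, 0 < f x) (hg_pos : ∀ x, 0 < g x)
    (hscore : ∀ x, (f x)⁻¹ • fderiv ℝ f x = (g x)⁻¹ • fderiv ℝ g x) :
    ∃ c : ℝ, ∀ x, f x = c * g x := by
  have hf_ne x := (hf_pos x).ne'
  have hg_ne x := (hg_pos x).ne'
  have hlog_diff : ∀ x y,
      Real.log (f x) - Real.log (g x) = Real.log (f y) - Real.log (g y) := by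
    refine is_const_of_fderiv_eq_zero ((hf.log hf_ne).sub (hg.log hg_ne)) fun x => ?_
    rw [fderiv_fun_sub ((hf x).log (hf_ne x)) ((hg x).log (hg_ne x)),
      fderiv.log (hf x) (hf_ne x), fderiv.log (hg x) (hg_ne x), hscore x, sub_self]
  refine ⟨f 0 / g 0, fun x => ?_⟩
  have hratio : f x / g x = f 0 / g 0 := by
    rw [← Real.exp_log (div_pos (hf_pos x) (hg_pos x)),
      ← Real.exp_log (div_pos (hf_pos 0) (hg_pos 0)),
      Real.log_div (hf_ne x) (hg_ne x), Real.log_div (hf_ne 0) (hg_ne 0), hlog_diff x 0]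
  rw [← hratio, div_mul_cancel₀ _ (hg_ne x)]

theorem eq_of_eq_const_mul_of_integral_eq_one {α : Type*} [MeasurableSpace α] {μ : Measure α}
    {f g : α → ℝ} {c : ℝ} (h : ∀ x, f x = c * g x)
    (hf : ∫ x, f x ∂μ = 1) (hg : ∫ x, g x ∂μ = 1) : f = g := by
  have hc : c = 1 := by
    calc c = c * ∫ x, g x ∂μ := by rw [hg, mul_one]
      _ = ∫ x, f x ∂μ := by simp only [h, integral_const_mul]
      _ = 1 := hf
  funext x
  rw [h x, hc, one_mul]

theorem stmt_3_general {n : ℕ}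
    (p q : EuclideanSpace ℝ (Fin n) → ℝ)
    (hp : Differentiable ℝ p) (hq : Differentiable ℝ q)
    (hppos : ∀ x, 0 < p x) (hqpos : ∀ x, 0 < q x)
    (hp1 : ∫ x, p x = 1) (hq1 : ∫ x, q x = 1)
    (hscore : ∀ x, (p x)⁻¹ • fderiv ℝ p x = (q x)⁻¹ • fderiv ℝ q x) :
    p = q := by
  obtain ⟨c, hc⟩ := exists_eq_const_mul_of_score_eq hp hq hppos hqpos hscore
  exact eq_of_eq_const_mul_of_integral_eq_one hc hp1 hq1

/-- Two strictly positive differentiable probability densities on `ℝⁿ` whose score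
functions (logarithmic gradients, i.e. `fderiv` divided by the density value)
coincide everywhere are equal. -/
theorem stmt_3 {n : ℕ} (hn : 0 < n)
    (p q : EuclideanSpace ℝ (Fin n) → ℝ)
    (hp : Differentiable ℝ p) (hq : Differentiable ℝ q)
    (hppos : ∀ x, 0 < p x) (hqpos : ∀ x, 0 < q x)
    (hpi : Integrable p) (hqi : Integrable q)
    (hp1 : ∫ x, p x = 1) (hq1 : ∫ x, q x = 1)
    (hscore : ∀ x, (p x)⁻¹ • fderiv ℝ p x = (q x)⁻¹ • fderiv ℝ q x) :
    p = q :=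
  stmt_3_general p q hp hq hppos hqpos hp1 hq1 hscore
end

section
/- Let (Ω, ℙ) be a probability space, V ≥ 1, c : Fin V → ℝ, and p : Fin V → ℝ≥0 with ∑_j p_j = 1. Let X₀ : Ω → ℝ be a random variable with ℙ(X₀ = c j) = p j for each j (and taking no other values), let ε : Ω → ℝ have law gaussianReal 0 1, and assume X₀ and ε are independent. Fix t ∈ (0,1] and set X_t = (1−t)·X₀ + t·ε. Define s : ℝ → ℝ by s(x) = − [∑_j p_j · (x − (1−t)·c j) · exp(−(x − (1−t)·c j)² / (2t²))] / [t² · ∑_j p_j · exp(−(x − (1−t)·c j)² / (2t²))]. Then the conditional expectation of −ε/t given the σ-algebra generated by X_t satisfies E[−ε/t ∣ σ(X_t)] = s(X_t) ℙ-almost surely. -/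
open MeasureTheory ProbabilityTheory
open scoped NNReal ENNReal

/-!
Given `X₀ = c j`, the noisy point `Y = (1 - t) X₀ + t ε` is Gaussian with mean `m j = (1 - t) c j`
and variance `t²`, and `-ε / t = -(Y - m j) / t²`. Hence, for every Borel set `B`,
`E[-ε / t; Y ∈ B] = ∑ j, p j ∫_B -(x - m j) / t² φ_j(x) dx`, where `φ_j` is the density of
`N(m j, t²)`. Since the `φ_j` share their normalising constant, the integrand
`∑ j, p j (-(x - m j) / t²) φ_j(x)` equals `s(x) ∑ j, p j φ_j(x)`, and integrating this back gives
`E[s(Y); Y ∈ B]`.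
-/

section Mixture

variable {Ω α β : Type*} [MeasurableSpace Ω] [MeasurableSpace α] [MeasurableSpace β]
  {P : Measure Ω} {ι : Type*} [Fintype ι] {p : ι → ℝ≥0} {c : ι → α}

lemma map_eq_sum_smul_dirac [IsProbabilityMeasure P] [MeasurableSingletonClass α]
    {X : Ω → α} (hX : Measurable X) (hp : ∑ j, p j = 1)
    (hlaw : ∀ j, P {ω | X ω = c j} = p j) (hsupp : ∀ ω, ∃ j, X ω = c j) :
    P.map X = ∑ j, (p j : ℝ≥0∞) • Measure.dirac (c j) := by
  classical
  -- a setwise `≤` suffices, both sides having mass one; this copes with repeated values of `c`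
  refine Measure.eq_of_le_of_measure_univ_eq ?_ ?_
  · refine Measure.le_iff.2 fun S hS => ?_
    have hcover : X ⁻¹' S ⊆ ⋃ j ∈ Finset.univ.filter (fun j => c j ∈ S), {ω | X ω = c j} := by
      intro ω hω
      obtain ⟨j, hj⟩ := hsupp ω
      simp only [Set.mem_iUnion, Finset.mem_filter, Finset.mem_univ, true_and]
      exact ⟨j, hj ▸ hω, hj⟩
    calc P.map X S = P (X ⁻¹' S) := Measure.map_apply hX hS
      _ ≤ ∑ j ∈ Finset.univ.filter (fun j => c j ∈ S), P {ω | X ω = c j} :=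
        (measure_mono hcover).trans (measure_biUnion_finset_le _ _)
      _ = _ := by
        simp [hlaw, Measure.dirac_apply' _ hS, Set.indicator_apply, Finset.sum_filter]
  · simp [Measure.map_apply hX MeasurableSet.univ, ← ENNReal.ofNNReal_finsetSum, hp]

variable [IsFiniteMeasure P] {X : Ω → α} {Y : Ω → β}

lemma map_prodMk_eq_sum_of_indepFun
    (hX : Measurable X) (hY : Measurable Y) (hXY : IndepFun X Y P)
    (hlaw : P.map X = ∑ j, (p j : ℝ≥0∞) • Measure.dirac (c j)) :
    P.map (fun ω => (X ω, Y ω)) = ∑ j, (p j : ℝ≥0∞) • (P.map Y).map (Prod.mk (c j)) := by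
  rw [(indepFun_iff_map_prod_eq_prod_map_map hX.aemeasurable hY.aemeasurable).1 hXY, hlaw,
    ← Measure.sum_fintype, Measure.prod_sum_left, Measure.sum_fintype]
  simp only [Measure.prod_smul_left, Measure.dirac_prod]

variable {g : α × β → ℝ}

lemma integrable_comp_of_indepFun (hX : Measurable X) (hY : Measurable Y)
    (hXY : IndepFun X Y P) (hlaw : P.map X = ∑ j, (p j : ℝ≥0∞) • Measure.dirac (c j))
    (hg : Measurable g) (hgi : ∀ j, Integrable (fun y => g (c j, y)) (P.map Y)) :
    Integrable (fun ω => g (X ω, Y ω)) P := by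
  have hXY' : Measurable fun ω => (X ω, Y ω) := hX.prodMk hY
  refine (integrable_map_measure hg.aestronglyMeasurable hXY'.aemeasurable).1 ?_
  rw [map_prodMk_eq_sum_of_indepFun hX hY hXY hlaw]
  refine integrable_finsetSum_measure.2 fun j _ => Integrable.smul_measure ?_ ENNReal.coe_ne_top
  exact (integrable_map_measure hg.aestronglyMeasurable measurable_prodMk_left.aemeasurable).2
    (hgi j)

lemma integral_comp_of_indepFun (hX : Measurable X) (hY : Measurable Y)
    (hXY : IndepFun X Y P) (hlaw : P.map X = ∑ j, (p j : ℝ≥0∞) • Measure.dirac (c j))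
    (hg : Measurable g) (hgi : ∀ j, Integrable (fun y => g (c j, y)) (P.map Y)) :
    ∫ ω, g (X ω, Y ω) ∂P = ∑ j, (p j : ℝ) * ∫ y, g (c j, y) ∂(P.map Y) := by
  have hXY' : Measurable fun ω => (X ω, Y ω) := hX.prodMk hY
  have hmap : ∀ j, Measurable (Prod.mk (β := β) (c j)) := fun j => measurable_prodMk_left
  rw [← integral_map hXY'.aemeasurable hg.aestronglyMeasurable,
    map_prodMk_eq_sum_of_indepFun hX hY hXY hlaw, integral_finsetSum_measure]
  · refine Finset.sum_congr rfl fun j _ => ?_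
    rw [integral_smul_measure, integral_map (hmap j).aemeasurable hg.aestronglyMeasurable]
    simp
  · exact fun j _ => Integrable.smul_measure
      ((integrable_map_measure hg.aestronglyMeasurable (hmap j).aemeasurable).2 (hgi j))
      ENNReal.coe_ne_top

end Mixture

lemma gaussianReal_map_const_add_const_mul {μ : ℝ} {v : ℝ≥0} (a b : ℝ) :
    (gaussianReal μ v).map (fun x => a + b * x)
      = gaussianReal (a + b * μ) (⟨b ^ 2, sq_nonneg b⟩ * v) := by
  have hcomp : (fun x => a + b * x) = (a + ·) ∘ (b * ·) := rfl
  rw [hcomp, ← Measure.map_map (by fun_prop) (by fun_prop), gaussianReal_map_const_mul,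
    gaussianReal_map_const_add, add_comm]
  rfl

lemma gaussianReal_zero_one_map_const_add_const_mul {v : ℝ≥0} (a b : ℝ) (hv : (v : ℝ) = b ^ 2) :
    (gaussianReal 0 1).map (fun e => a + b * e) = gaussianReal a v := by
  rw [gaussianReal_map_const_add_const_mul]
  congr 1
  · ring
  · ext
    rw [hv]
    exact mul_one _

lemma integrable_comp_const_add_const_mul_gaussianReal {f : ℝ → ℝ} {v : ℝ≥0} {a : ℝ} (b : ℝ)
    (hv : (v : ℝ) = b ^ 2) (hf : Integrable f (gaussianReal a v)) :
    Integrable (fun e => f (a + b * e)) (gaussianReal 0 1) := by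
  rw [← gaussianReal_zero_one_map_const_add_const_mul a b hv] at hf
  exact (integrable_map_measure hf.aestronglyMeasurable (by fun_prop)).1 hf

lemma integral_comp_const_add_const_mul_gaussianReal {f : ℝ → ℝ} {v : ℝ≥0} {a : ℝ} (b : ℝ)
    (hv : (v : ℝ) = b ^ 2) (hf : AEStronglyMeasurable f (gaussianReal a v)) :
    ∫ e, f (a + b * e) ∂(gaussianReal 0 1) = ∫ x, f x ∂(gaussianReal a v) := by
  rw [← gaussianReal_zero_one_map_const_add_const_mul a b hv] at hf ⊢
  exact (integral_map (by fun_prop) hf).symm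

section GaussianNoise

variable {Ω : Type*} [MeasurableSpace Ω] {P : Measure Ω} [IsFiniteMeasure P]
  {ι : Type*} [Fintype ι] {p : ι → ℝ≥0} {c : ι → ℝ} {X ε : Ω → ℝ} {G : ℝ → ℝ → ℝ} {v : ℝ≥0}

lemma measurable_comp_affine (hG : Measurable (Function.uncurry G)) (a b : ℝ) :
    Measurable fun q : ℝ × ℝ => G q.1 (a * q.1 + b * q.2) :=
  hG.comp (measurable_fst.prodMk (by fun_prop : Measurable fun q : ℝ × ℝ => a * q.1 + b * q.2))

lemma integrable_comp_affine_of_indepFun (hX : Measurable X) (hε : Measurable ε)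
    (hXε : IndepFun X ε P) (hlaw : P.map X = ∑ j, (p j : ℝ≥0∞) • Measure.dirac (c j))
    (hεlaw : P.map ε = gaussianReal 0 1) {a b : ℝ} (hv : (v : ℝ) = b ^ 2)
    (hG : Measurable (Function.uncurry G))
    (hGi : ∀ j, Integrable (G (c j)) (gaussianReal (a * c j) v)) :
    Integrable (fun ω => G (X ω) (a * X ω + b * ε ω)) P :=
  integrable_comp_of_indepFun (g := fun q => G q.1 (a * q.1 + b * q.2)) hX hε hXε hlaw
    (measurable_comp_affine hG a b)
    fun j => hεlaw ▸ integrable_comp_const_add_const_mul_gaussianReal b hv (hGi j)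

lemma integral_comp_affine_of_indepFun (hX : Measurable X) (hε : Measurable ε)
    (hXε : IndepFun X ε P) (hlaw : P.map X = ∑ j, (p j : ℝ≥0∞) • Measure.dirac (c j))
    (hεlaw : P.map ε = gaussianReal 0 1) {a b : ℝ} (hv : (v : ℝ) = b ^ 2)
    (hG : Measurable (Function.uncurry G))
    (hGi : ∀ j, Integrable (G (c j)) (gaussianReal (a * c j) v)) :
    ∫ ω, G (X ω) (a * X ω + b * ε ω) ∂P
      = ∑ j, (p j : ℝ) * ∫ y, G (c j) y ∂(gaussianReal (a * c j) v) := by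
  rw [integral_comp_of_indepFun (g := fun q => G q.1 (a * q.1 + b * q.2)) hX hε hXε hlaw
    (measurable_comp_affine hG a b)
    fun j => hεlaw ▸ integrable_comp_const_add_const_mul_gaussianReal b hv (hGi j), hεlaw]
  refine Finset.sum_congr rfl fun j _ => ?_
  rw [integral_comp_const_add_const_mul_gaussianReal (f := G (c j)) b hv
    (hGi j).aestronglyMeasurable]

lemma setIntegral_comp_affine_of_indepFun (hX : Measurable X) (hε : Measurable ε)
    (hXε : IndepFun X ε P) (hlaw : P.map X = ∑ j, (p j : ℝ≥0∞) • Measure.dirac (c j))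
    (hεlaw : P.map ε = gaussianReal 0 1) {a b : ℝ} (hv : (v : ℝ) = b ^ 2)
    (hG : Measurable (Function.uncurry G))
    (hGi : ∀ j, Integrable (G (c j)) (gaussianReal (a * c j) v))
    {B : Set ℝ} (hB : MeasurableSet B) :
    ∫ ω in (fun ω => a * X ω + b * ε ω) ⁻¹' B, G (X ω) (a * X ω + b * ε ω) ∂P
      = ∑ j, (p j : ℝ) * ∫ y in B, G (c j) y ∂(gaussianReal (a * c j) v) := by
  rw [← integral_indicator (hB.preimage (by fun_prop))]
  simp_rw [← integral_indicator hB]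
  exact integral_comp_affine_of_indepFun (G := fun x => B.indicator (G x)) hX hε hXε hlaw hεlaw
    hv (hG.indicator (measurable_snd hB)) fun j => (hGi j).indicator hB

end GaussianNoise

section GaussianIntegrals

variable {μ : ℝ} {v : ℝ≥0}

lemma integrable_neg_sub_div_gaussianReal (a b : ℝ) :
    Integrable (fun x => -(x - a) / b) (gaussianReal μ v) :=
  ((((memLp_id_gaussianReal 1).integrable le_rfl).sub (integrable_const a)).neg).div_const b

lemma MeasureTheory.Integrable.gaussianPDFReal_smul {E : Type*} [NormedAddCommGroup E]
    [NormedSpace ℝ E] {f : ℝ → E} (hv : v ≠ 0) (hf : Integrable f (gaussianReal μ v)) :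
    Integrable fun x => gaussianPDFReal μ v x • f x := by
  rw [gaussianReal_of_var_ne_zero _ hv, integrable_withDensity_iff_integrable_smul'
    (measurable_gaussianPDF _ _) (ae_of_all _ fun _ => gaussianPDF_lt_top)] at hf
  simpa using hf

lemma sum_mul_integral_gaussianReal {ι : Type*} [Fintype ι] {m : ι → ℝ} {f : ι → ℝ → ℝ}
    (hv : v ≠ 0) (hf : ∀ j, Integrable (f j) (gaussianReal (m j) v)) (w : ι → ℝ) :
    ∑ j, w j * ∫ x, f j x ∂(gaussianReal (m j) v)
      = ∫ x, ∑ j, w j * gaussianPDFReal (m j) v x * f j x := by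
  have hint : ∀ j, Integrable fun x => w j * gaussianPDFReal (m j) v x * f j x := fun j => by
    simpa only [smul_eq_mul, mul_assoc] using ((hf j).gaussianPDFReal_smul hv).const_mul (w j)
  rw [integral_finsetSum _ fun j _ => hint j]
  refine Finset.sum_congr rfl fun j _ => ?_
  rw [integral_gaussianReal_eq_integral_smul hv, ← integral_const_mul]
  simp only [smul_eq_mul, mul_assoc]

end GaussianIntegrals

/-- The score `x ↦ (log ∑ j, p j φ_{m j, v}(x))'` of a Gaussian mixture (Equation (1)). -/
noncomputable def gaussianMixtureScore {ι : Type*} [Fintype ι] (p : ι → ℝ≥0) (m : ι → ℝ)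
    (v x : ℝ) : ℝ :=
  -(∑ j, (p j : ℝ) * (x - m j) * Real.exp (-(x - m j) ^ 2 / (2 * v))) /
    (v * ∑ j, (p j : ℝ) * Real.exp (-(x - m j) ^ 2 / (2 * v)))

namespace gaussianMixtureScore

variable {ι : Type*} [Fintype ι] (p : ι → ℝ≥0) (m : ι → ℝ)

lemma measurable (v : ℝ) : Measurable (gaussianMixtureScore p m v) := by
  unfold gaussianMixtureScore
  fun_prop

lemma abs_le {v : ℝ} (hv : 0 < v) (x : ℝ) :
    |gaussianMixtureScore p m v x| ≤ (|x| + ∑ j, |m j|) / v := by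
  rw [gaussianMixtureScore]
  set D := ∑ j, (p j : ℝ) * Real.exp (-(x - m j) ^ 2 / (2 * v))
  set N := ∑ j, (p j : ℝ) * (x - m j) * Real.exp (-(x - m j) ^ 2 / (2 * v))
  have hN : |N| ≤ (|x| + ∑ j, |m j|) * D := by
    rw [Finset.mul_sum]
    refine (Finset.abs_sum_le_sum_abs _ _).trans (Finset.sum_le_sum fun j _ => ?_)
    have hdist : |x - m j| ≤ |x| + ∑ i, |m i| :=
      (abs_sub _ _).trans (add_le_add_right
        (Finset.single_le_sum (fun i _ => abs_nonneg (m i)) (Finset.mem_univ j)) _)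
    rw [abs_mul, abs_mul, NNReal.abs_eq, abs_of_pos (Real.exp_pos _)]
    calc (p j : ℝ) * |x - m j| * Real.exp (-(x - m j) ^ 2 / (2 * v))
        ≤ (p j : ℝ) * (|x| + ∑ i, |m i|) * Real.exp (-(x - m j) ^ 2 / (2 * v)) := by gcongr
      _ = _ := by ring
  rcases (show 0 ≤ D by positivity).eq_or_lt with hD | hD
  · rw [← hD, mul_zero, div_zero, abs_zero]
    positivity
  rw [abs_div, abs_neg, abs_of_pos (mul_pos hv hD), div_le_div_iff₀ (mul_pos hv hD) hv]
  calc |N| * v ≤ (|x| + ∑ j, |m j|) * D * v := by gcongr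
    _ = _ := by ring

lemma mul_sum_gaussianPDFReal (v : ℝ≥0) (x : ℝ) :
    gaussianMixtureScore p m v x * ∑ j, (p j : ℝ) * gaussianPDFReal (m j) v x
      = ∑ j, (p j : ℝ) * gaussianPDFReal (m j) v x * (-(x - m j) / v) := by
  simp only [gaussianMixtureScore, gaussianPDFReal]
  set K := (√(2 * Real.pi * v))⁻¹
  set D := ∑ j, (p j : ℝ) * Real.exp (-(x - m j) ^ 2 / (2 * v))
  set N := ∑ j, (p j : ℝ) * (x - m j) * Real.exp (-(x - m j) ^ 2 / (2 * v))
  have hL : ∑ j, (p j : ℝ) * (K * Real.exp (-(x - m j) ^ 2 / (2 * v))) = K * D := by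
    rw [Finset.mul_sum]
    exact Finset.sum_congr rfl fun j _ => by ring
  have hR : ∑ j, (p j : ℝ) * (K * Real.exp (-(x - m j) ^ 2 / (2 * v))) * (-(x - m j) / v)
      = -(K / v) * N := by
    rw [Finset.mul_sum]
    exact Finset.sum_congr rfl fun j _ => by ring
  rw [hL, hR]
  by_cases hD : D = 0
  · have hterm := (Finset.sum_eq_zero_iff_of_nonneg fun j _ => by positivity).1 hD
    have hN : N = 0 := Finset.sum_eq_zero fun j hj => by
      linear_combination (x - m j) * hterm j hj
    simp [hD, hN]
  · calc -N / (v * D) * (K * D) = -(K / v) * N * (D / D) := by ring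
      _ = -(K / v) * N := by rw [div_self hD, mul_one]

lemma integrable_gaussianReal {μ : ℝ} {v w : ℝ≥0} (hv : v ≠ 0) :
    Integrable (gaussianMixtureScore p m v) (gaussianReal μ w) := by
  have hid : Integrable id (gaussianReal μ w) := (memLp_id_gaussianReal 1).integrable le_rfl
  refine ((hid.abs.div_const v).add (integrable_const ((∑ j, |m j|) / v))).mono'
    (measurable p m v).aestronglyMeasurable (ae_of_all _ fun x => ?_)
  refine (abs_le p m (NNReal.coe_pos.2 (pos_iff_ne_zero.2 hv)) x).trans_eq ?_
  simp only [Pi.add_apply, id]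
  ring

theorem sum_mul_setIntegral_eq {v : ℝ≥0} (hv : v ≠ 0) {B : Set ℝ} (hB : MeasurableSet B) :
    ∑ j, (p j : ℝ) * ∫ x in B, -(x - m j) / v ∂(gaussianReal (m j) v)
      = ∑ j, (p j : ℝ) * ∫ x in B, gaussianMixtureScore p m v x ∂(gaussianReal (m j) v) := by
  have hnoise : ∀ j, Integrable (fun x => -(x - m j) / v) (gaussianReal (m j) v) := fun j =>
    integrable_neg_sub_div_gaussianReal (m j) v
  have hscore : ∀ j, Integrable (gaussianMixtureScore p m v) (gaussianReal (m j) v) := fun j =>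
    integrable_gaussianReal p m hv
  simp_rw [← integral_indicator hB]
  rw [sum_mul_integral_gaussianReal hv (fun j => (hnoise j).indicator hB),
    sum_mul_integral_gaussianReal hv (fun j => (hscore j).indicator hB)]
  refine integral_congr_ae (ae_of_all _ fun x => ?_)
  by_cases hx : x ∈ B
  · simp only [Set.indicator_of_mem hx]
    rw [← mul_sum_gaussianPDFReal, Finset.mul_sum]
    exact Finset.sum_congr rfl fun j _ => by ring
  · simp [Set.indicator_of_notMem hx]

end gaussianMixtureScore

theorem condExp_neg_div_ae_eq_gaussianMixtureScore {Ω ι : Type*} [MeasurableSpace Ω]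
    {P : Measure Ω} [IsProbabilityMeasure P] [Fintype ι] {p : ι → ℝ≥0} {c : ι → ℝ}
    {X ε : Ω → ℝ} (hX : Measurable X) (hε : Measurable ε) (hXε : IndepFun X ε P)
    (hlaw : P.map X = ∑ j, (p j : ℝ≥0∞) • Measure.dirac (c j))
    (hεlaw : P.map ε = gaussianReal 0 1) (a : ℝ) {b : ℝ} (hb : b ≠ 0) :
    P[fun ω => -ε ω / b | MeasurableSpace.comap (fun ω => a * X ω + b * ε ω) inferInstance]
      =ᵐ[P] fun ω => gaussianMixtureScore p (fun j => a * c j) (b ^ 2) (a * X ω + b * ε ω) := by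
  set v : ℝ≥0 := ⟨b ^ 2, sq_nonneg b⟩
  have hv : (v : ℝ) = b ^ 2 := rfl
  have hv0 : v ≠ 0 := by
    rw [← NNReal.coe_ne_zero, hv]
    exact pow_ne_zero 2 hb
  set Y := fun ω => a * X ω + b * ε ω
  set s := gaussianMixtureScore p (fun j => a * c j) v
  have hY : Measurable Y := by fun_prop
  have hnoise : (fun ω => -ε ω / b) = fun ω => -(Y ω - a * X ω) / v := by
    funext ω
    rw [hv]
    field_simp
    ring
  have hGnoise : Measurable (Function.uncurry fun x y : ℝ => -(y - a * x) / v) := by fun_prop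
  have hGscore : Measurable (Function.uncurry fun (_ : ℝ) y => s y) :=
    (gaussianMixtureScore.measurable _ _ _).comp measurable_snd
  have hnoise_int : ∀ j, Integrable (fun y => -(y - a * c j) / v) (gaussianReal (a * c j) v) :=
    fun j => integrable_neg_sub_div_gaussianReal _ _
  have hscore_int : ∀ j, Integrable s (gaussianReal (a * c j) v) := fun j =>
    gaussianMixtureScore.integrable_gaussianReal _ _ hv0
  show P[fun ω => -ε ω / b | MeasurableSpace.comap Y inferInstance] =ᵐ[P] fun ω => s (Y ω)
  rw [hnoise]
  refine (ae_eq_condExp_of_forall_setIntegral_eq hY.comap_le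
    (integrable_comp_affine_of_indepFun hX hε hXε hlaw hεlaw hv hGnoise hnoise_int)
    (fun _ _ _ => (integrable_comp_affine_of_indepFun hX hε hXε hlaw hεlaw hv hGscore
      hscore_int).integrableOn) ?_
    ((gaussianMixtureScore.measurable _ _ _).comp
      (Measurable.of_comap_le le_rfl)).aestronglyMeasurable).symm
  rintro _ ⟨B, hB, rfl⟩ -
  calc ∫ ω in Y ⁻¹' B, s (Y ω) ∂P
      = ∑ j, (p j : ℝ) * ∫ y in B, s y ∂(gaussianReal (a * c j) v) :=
        setIntegral_comp_affine_of_indepFun hX hε hXε hlaw hεlaw hv hGscore hscore_int hB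
    _ = ∑ j, (p j : ℝ) * ∫ y in B, -(y - a * c j) / v ∂(gaussianReal (a * c j) v) :=
        (gaussianMixtureScore.sum_mul_setIntegral_eq p _ hv0 hB).symm
    _ = ∫ ω in Y ⁻¹' B, -(Y ω - a * X ω) / v ∂P :=
        (setIntegral_comp_affine_of_indepFun hX hε hXε hlaw hεlaw hv hGnoise hnoise_int
          hB).symm

theorem stmt_7_general {Ω : Type*} [MeasurableSpace Ω] (P : Measure Ω) [IsProbabilityMeasure P]
    {V : ℕ} (c : Fin V → ℝ) (p : Fin V → ℝ≥0) (hp : ∑ j, p j = 1)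
    (X₀ ε : Ω → ℝ) (hX₀ : Measurable X₀) (hε : Measurable ε)
    (hlaw₀ : ∀ j, P {ω | X₀ ω = c j} = (p j : ℝ≥0∞))
    (hsupp : ∀ ω, ∃ j, X₀ ω = c j)
    (hεlaw : Measure.map ε P = gaussianReal 0 1)
    (hindep : IndepFun X₀ ε P)
    (t : ℝ) (ht : t ∈ Set.Ioc (0 : ℝ) 1) :
    P[fun ω => -ε ω / t |
        MeasurableSpace.comap (fun ω => (1 - t) * X₀ ω + t * ε ω) inferInstance]
      =ᵐ[P]
    fun ω =>
      -(∑ j, (p j : ℝ) * (((1 - t) * X₀ ω + t * ε ω) - (1 - t) * c j) *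
            Real.exp (-(((1 - t) * X₀ ω + t * ε ω) - (1 - t) * c j) ^ 2 / (2 * t ^ 2))) /
        (t ^ 2 * ∑ j, (p j : ℝ) *
            Real.exp (-(((1 - t) * X₀ ω + t * ε ω) - (1 - t) * c j) ^ 2 / (2 * t ^ 2))) :=
  condExp_neg_div_ae_eq_gaussianMixtureScore hX₀ hε hindep
    (map_eq_sum_smul_dirac hX₀ hp hlaw₀ hsupp) hεlaw (1 - t) ht.1.ne'

/-- The score of the RectFlow noisy marginal as a conditional expectation:
if `X₀` is distributed as `∑ j, p j δ_{c j}`, `ε ∼ N(0,1)` is independent of `X₀`, and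
`X_t = (1-t)X₀ + tε`, then `E[-ε/t ∣ σ(X_t)] = s(X_t)` a.s., where `s` is the
closed-form score of Equation (1). -/
theorem stmt_7 {Ω : Type*} [MeasurableSpace Ω] (P : Measure Ω) [IsProbabilityMeasure P]
    {V : ℕ} (hV : 1 ≤ V) (c : Fin V → ℝ) (p : Fin V → ℝ≥0) (hp : ∑ j, p j = 1)
    (X₀ ε : Ω → ℝ) (hX₀ : Measurable X₀) (hε : Measurable ε)
    (hlaw₀ : ∀ j, P {ω | X₀ ω = c j} = (p j : ℝ≥0∞))
    (hsupp : ∀ ω, ∃ j, X₀ ω = c j)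
    (hεlaw : Measure.map ε P = gaussianReal 0 1)
    (hindep : IndepFun X₀ ε P)
    (t : ℝ) (ht : t ∈ Set.Ioc (0 : ℝ) 1) :
    P[fun ω => -ε ω / t |
        MeasurableSpace.comap (fun ω => (1 - t) * X₀ ω + t * ε ω) inferInstance]
      =ᵐ[P]
    fun ω =>
      -(∑ j, (p j : ℝ) * (((1 - t) * X₀ ω + t * ε ω) - (1 - t) * c j) *
            Real.exp (-(((1 - t) * X₀ ω + t * ε ω) - (1 - t) * c j) ^ 2 / (2 * t ^ 2))) /
        (t ^ 2 * ∑ j, (p j : ℝ) *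
            Real.exp (-(((1 - t) * X₀ ω + t * ε ω) - (1 - t) * c j) ^ 2 / (2 * t ^ 2))) :=
  stmt_7_general P c p hp X₀ ε hX₀ hε hlaw₀ hsupp hεlaw hindep t ht
end
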